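/- If a cost function T : ℕ → ℕ satisfies T(0) = T(1) = d and T(n) ≤ T(⌈n/2⌉) + T(⌊n/2⌋) + c·n for n ≥ 2, then T(n) ≤ c · n · ⌈log₂ n⌉ + d · n for all n ≥ 1. -/
import Mathlib


theorem merge_sort_bound (c d : ℕ) (T : ℕ → ℕ)
    (h0 : T 0 = d) (h1 : T 1 = d)
    (hrec : ∀ n, 2 ≤ n → T n ≤ T ((n + 1) / 2) + T (n / 2) + c * n) :
    ∀ n, 1 ≤ n → T n ≤ c * n * Nat.clog 2 n + d * n := by
  intro n
  induction n using Nat.strong_induction_on with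
  | _ n ih =>
    intro hn
    rcases eq_or_lt_of_le hn with h | h2
    · simp [← h, h1, Nat.clog_one_right]
    · have h2 : 2 ≤ n := h2
      have hLn : Nat.clog 2 n = Nat.clog 2 ((n + 1) / 2) + 1 := by
        have := Nat.clog_of_two_le (b := 2) (by norm_num) h2
        simpa using this
      have hLb : Nat.clog 2 (n / 2) ≤ Nat.clog 2 ((n + 1) / 2) :=
        Nat.clog_mono_right _ (by omega)
      have ia := ih ((n + 1) / 2) (by omega) (by omega)
      have ib := ih (n / 2) (by omega) (by omega)
      have hab : (n + 1) / 2 + n / 2 = n := by omega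
      calc T n ≤ T ((n + 1) / 2) + T (n / 2) + c * n := hrec n h2
        _ ≤ (c * ((n + 1) / 2) * Nat.clog 2 ((n + 1) / 2) + d * ((n + 1) / 2))
            + (c * (n / 2) * Nat.clog 2 (n / 2) + d * (n / 2)) + c * n := by
            gcongr
        _ ≤ c * n * Nat.clog 2 n + d * n := by
            rw [hLn]
            nlinarith [hab, Nat.mul_le_mul_left (c * (n / 2)) hLb]
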